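/- Suppose (U_n) is a linear recurrence sequence of integers of order k ≥ 2 having a dominant root α₁, let a, b be positive integers and ε > 0. Then there exist (effectively computable) constants c₇ and c₈, depending only on ε, γ, r, k, a, b, such that for every solution (n, m, z₁,…,z_r) with n ≥ m ≥ 0, z₁,…,z_r ∈ 𝒰_S, aU_n + bU_m = z₁ + ⋯ + z_r, and |z_i|^{1+ε} ≤ |z_r| for all 1 ≤ i ≤ r−1, one has log|z_r| < c₇·n + c₈. -/

import Mathlib

open scoped BigOperators

/-- `z` is an `S`-unit for the finite set of primes `p 0, …, p (L-1)`:
`z = ± p₁^{e₁} ⋯ p_L^{e_L}` with nonnegative integer exponents. -/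
def IsSUnit {L : ℕ} (p : Fin L → ℕ) (z : ℤ) : Prop :=
  ∃ (e : Fin L → ℕ) (s : ℤ), (s = 1 ∨ s = -1) ∧ z = s * ∏ i, (p i : ℤ) ^ e i

/-!
The recurrence gives `|U_n| ≤ G Bⁿ` with `B = 1 + ∑ |cᵢ|`, so `|a U_n + b U_m| ≤ (a + b) G Bⁿ`
for `m ≤ n`. In `z₁ + ⋯ + z_r = a U_n + b U_m` every `zᵢ` with `i < r` has
`|zᵢ| ≤ |z_r|^{1/(1+ε)}`, so `|z_r| ≤ (a + b) G Bⁿ + r |z_r|^{1/(1+ε)}`. Either the second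
summand is at most `|z_r| / 2`, and then `|z_r| ≤ 2 (a + b) G Bⁿ`, or `|z_r|^{ε/(1+ε)} < 2r`
bounds `|z_r|` by a constant. Taking logarithms gives `log |z_r| < n log B + c₈`.
-/

open Finset

section LinearRecurrence

variable {R : Type*} [SeminormedRing R] {k : ℕ} {c : Fin k → R} {u : ℕ → R}

theorem norm_le_mul_pow_of_linearRecurrence (hk : 0 < k)
    (hrec : ∀ n, u (n + k) = ∑ i : Fin k, c i * u (n + k - 1 - i))
    {G B : ℝ} (hG0 : 0 ≤ G) (hG : ∀ j < k, ‖u j‖ ≤ G) (hB : 1 ≤ B) (hcB : ∑ i, ‖c i‖ ≤ B)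
    (n : ℕ) : ‖u n‖ ≤ G * B ^ n := by
  induction n using Nat.strong_induction_on with
  | _ n ih =>
  rcases lt_or_ge n k with hn | hn
  · exact (hG n hn).trans (le_mul_of_one_le_right hG0 (one_le_pow₀ hB))
  obtain ⟨j, rfl⟩ : ∃ j, n = j + k := ⟨n - k, by omega⟩
  have hprev : ∀ i : Fin k, ‖u (j + k - 1 - i)‖ ≤ G * B ^ (j + k - 1) := fun i =>
    (ih _ (by omega)).trans (mul_le_mul_of_nonneg_left (pow_le_pow_right₀ hB (by omega)) hG0)
  calc ‖u (j + k)‖ = ‖∑ i, c i * u (j + k - 1 - i)‖ := by rw [hrec]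
    _ ≤ ∑ i, ‖c i‖ * (G * B ^ (j + k - 1)) := norm_sum_le_of_le _ fun i _ =>
        (norm_mul_le _ _).trans (mul_le_mul_of_nonneg_left (hprev i) (norm_nonneg _))
    _ = (∑ i, ‖c i‖) * (G * B ^ (j + k - 1)) := (sum_mul _ _ _).symm
    _ ≤ B * (G * B ^ (j + k - 1)) :=
        mul_le_mul_of_nonneg_right hcB (by positivity)
    _ = G * B ^ (j + k) := by
        rw [mul_left_comm, ← pow_succ', Nat.sub_add_cancel (by omega)]

theorem exists_norm_le_mul_pow_of_linearRecurrence (hk : 0 < k)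
    (hrec : ∀ n, u (n + k) = ∑ i : Fin k, c i * u (n + k - 1 - i)) :
    ∃ G B : ℝ, 0 ≤ G ∧ 1 ≤ B ∧ ∀ ⦃m n : ℕ⦄, m ≤ n → ‖u m‖ ≤ G * B ^ n := by
  refine ⟨∑ j ∈ range k, ‖u j‖, 1 + ∑ i, ‖c i‖, by positivity, by simp [sum_nonneg],
    fun m n hmn => ?_⟩
  have hG0 : 0 ≤ ∑ j ∈ range k, ‖u j‖ := by positivity
  have hB : 1 ≤ 1 + ∑ i, ‖c i‖ := by simp [sum_nonneg]
  calc ‖u m‖ ≤ (∑ j ∈ range k, ‖u j‖) * (1 + ∑ i, ‖c i‖) ^ m :=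
        norm_le_mul_pow_of_linearRecurrence hk hrec hG0
          (fun j hj => single_le_sum (fun i _ => norm_nonneg (u i)) (mem_range.2 hj)) hB
          (by linarith) m
    _ ≤ _ := mul_le_mul_of_nonneg_left (pow_le_pow_right₀ hB hmn) hG0

end LinearRecurrence

theorem abs_natCast_mul_add_natCast_mul_le {x y M : ℝ} (a b : ℕ) (hx : |x| ≤ M)
    (hy : |y| ≤ M) : |a * x + b * y| ≤ (a + b) * M := by
  calc |a * x + b * y| ≤ a * |x| + b * |y| := by
        simpa only [abs_mul, Nat.abs_cast] using abs_add_le (a * x) (b * y)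
    _ ≤ a * M + b * M := by gcongr
    _ = (a + b) * M := by ring

theorem norm_le_norm_sum_add_sum_erase {ι E : Type*} [SeminormedAddCommGroup E] [DecidableEq ι]
    {s : Finset ι} {j : ι} (hj : j ∈ s) (f : ι → E) :
    ‖f j‖ ≤ ‖∑ i ∈ s, f i‖ + ∑ i ∈ s.erase j, ‖f i‖ := by
  rw [← add_sum_erase s f hj]
  calc ‖f j‖ = ‖(f j + ∑ i ∈ s.erase j, f i) - ∑ i ∈ s.erase j, f i‖ := by
        rw [add_sub_cancel_right]
    _ ≤ ‖f j + ∑ i ∈ s.erase j, f i‖ + ‖∑ i ∈ s.erase j, f i‖ := norm_sub_le _ _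
    _ ≤ _ := by gcongr; exact norm_sum_le _ _

namespace Real

theorem le_rpow_inv_one_sub_of_le_mul_rpow {θ K X : ℝ} (hθ : θ < 1) (hK : 0 ≤ K) (hX : 0 ≤ X)
    (h : X ≤ K * X ^ θ) : X ≤ K ^ (1 - θ)⁻¹ := by
  rcases hX.eq_or_lt with rfl | hX
  · exact rpow_nonneg hK _
  rw [le_rpow_inv_iff_of_pos hX.le hK (by linarith), rpow_sub hX, rpow_one,
    div_le_iff₀ (rpow_pos_of_pos hX θ)]
  exact h

theorem le_max_of_le_add_mul_rpow {θ M K X : ℝ} (hθ : θ < 1) (hK : 0 ≤ K) (hX : 0 ≤ X)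
    (h : X ≤ M + K * X ^ θ) : X ≤ max (2 * M) ((2 * K) ^ (1 - θ)⁻¹) := by
  by_cases hhalf : K * X ^ θ ≤ X / 2
  · exact le_max_of_le_left (by linarith)
  · exact le_max_of_le_right (le_rpow_inv_one_sub_of_le_mul_rpow hθ (by positivity) hX
      (by linarith))

theorem abs_le_max_of_rpow_abs_le {ι : Type*} [Fintype ι] [DecidableEq ι] {ε : ℝ} (hε : 0 < ε)
    (x : ι → ℝ) (j : ι) (hx : ∀ i ≠ j, |x i| ^ (1 + ε) ≤ |x j|) :
    |x j| ≤ max (2 * |∑ i, x i|) ((2 * Fintype.card ι) ^ (1 - (1 + ε)⁻¹)⁻¹) := by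
  refine le_max_of_le_add_mul_rpow (inv_lt_one_of_one_lt₀ (by linarith)) (Nat.cast_nonneg _)
    (abs_nonneg _) ?_
  have hterm : ∀ i ∈ univ.erase j, |x i| ≤ |x j| ^ (1 + ε)⁻¹ := fun i hi =>
    (le_rpow_inv_iff_of_pos (abs_nonneg _) (abs_nonneg _) (by linarith)).2
      (hx i (ne_of_mem_erase hi))
  calc |x j| ≤ |∑ i, x i| + ∑ i ∈ univ.erase j, |x i| := by
        simpa only [norm_eq_abs] using norm_le_norm_sum_add_sum_erase (mem_univ j) x
    _ ≤ |∑ i, x i| + (univ.erase j).card * |x j| ^ (1 + ε)⁻¹ := by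
        gcongr; simpa only [nsmul_eq_mul] using sum_le_card_nsmul _ _ _ hterm
    _ ≤ |∑ i, x i| + Fintype.card ι * |x j| ^ (1 + ε)⁻¹ := by
        gcongr; exact card_erase_le

theorem log_lt_of_le_mul_pow {X D B : ℝ} (hX : 0 ≤ X) (hD : 1 ≤ D) (hB : 1 ≤ B) {n : ℕ}
    (h : X ≤ D * B ^ n) : log X < log B * n + (log D + 1) := by
  have hDB : 1 ≤ D * B ^ n := one_le_mul_of_one_le_of_one_le hD (one_le_pow₀ hB)
  have hlog : log X ≤ log (D * B ^ n) := by
    rcases hX.eq_or_lt with rfl | hX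
    · simpa only [log_zero] using log_nonneg hDB
    · exact log_le_log hX h
  rw [log_mul (by linarith) (by positivity), log_pow] at hlog
  linarith

end Real

theorem log_zr_upper_bound
    (k : ℕ) (hk : 2 ≤ k)
    (c : Fin k → ℤ)
    (U : ℕ → ℤ)
    (hrec : ∀ n : ℕ, U (n + k) = ∑ i : Fin k, c i * U (n + k - 1 - (i : ℕ)))
    (L : ℕ) (p : Fin L → ℕ)
    (a b : ℕ)
    (ε : ℝ) (hε : 0 < ε) (r : ℕ) (hr : 1 ≤ r) :
    ∃ c₇ c₈ : ℝ, ∀ (n m : ℕ) (z : Fin r → ℤ),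
      m ≤ n →
      (∀ i, IsSUnit p (z i)) →
      ((a : ℤ) * U n + (b : ℤ) * U m = ∑ i, z i) →
      (∀ i : Fin r, (i : ℕ) < r - 1 →
        ((|z i| : ℝ)) ^ (1 + ε) ≤ ((|z ⟨r - 1, by omega⟩| : ℝ))) →
      Real.log ((|z ⟨r - 1, by omega⟩| : ℝ)) < c₇ * n + c₈ := by
  obtain ⟨G, B, hG, hB, hU⟩ := exists_norm_le_mul_pow_of_linearRecurrence (by omega) hrec
  set K : ℝ := (2 * r) ^ (1 - (1 + ε)⁻¹)⁻¹ with hK_def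
  have hK : 0 ≤ K := Real.rpow_nonneg (by positivity) _
  refine ⟨Real.log B, Real.log (2 * (a + b) * G + K + 1) + 1, ?_⟩
  intro n m z hmn _ hsum hsmall
  have hS : |∑ i, (z i : ℝ)| ≤ (a + b) * (G * B ^ n) := by
    rw [← Int.cast_sum, ← hsum]
    push_cast
    exact abs_natCast_mul_add_natCast_mul_le a b (Int.norm_eq_abs (U n) ▸ hU le_rfl)
      (Int.norm_eq_abs (U m) ▸ hU hmn)
  have hlast := Real.abs_le_max_of_rpow_abs_le hε (fun i => (z i : ℝ)) ⟨r - 1, by omega⟩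
    fun i hi => hsmall i (by have : (i : ℕ) ≠ r - 1 := Fin.val_ne_of_ne hi; omega)
  rw [Fintype.card_fin, ← hK_def] at hlast
  have hBn : 1 ≤ B ^ n := one_le_pow₀ hB
  have hM : 0 ≤ 2 * (a + b) * G := by positivity
  refine Real.log_lt_of_le_mul_pow (abs_nonneg _) (by linarith) hB
    (hlast.trans (max_le ?_ ?_)) <;> nlinarith [le_mul_of_one_le_right hK hBn]
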